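/- Let n be an odd positive integer and let h, k be nonnegative integers. Then, in ℤ[q], D_q(h+n, k+n) ≡ D_q(h+n, k) + D_q(h, k+n) + D_q(h, k) (mod Φ_n(q)). -/

import Mathlib

open Polynomial Finset

/-!
Divisibility by `Φ_n` is tested by evaluating at a primitive `n`-th root of unity `ζ ∈ ℂ`.
Since `(1 - q^b) [n choose b]_q = (1 - q^n) [n-1 choose b-1]_q`, the value `[n choose b]_ζ` vanishes
for `0 < b < n`, and the q-Pascal rule then gives the q-Lucas relations
`[a+n choose b]_ζ = [a choose b]_ζ` for `b < n` and
`[a+n choose b+n]_ζ = [a choose b+n]_ζ + [a choose b]_ζ`.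
Splitting the sum defining `D_q(h+n, k+n)` at `j = n`, the terms with `j < n` give those of
`D_q(h, k+n)` and `D_q(h+n, k)`, and the terms with `j = n + i` give the rest of these two sums
together with the terms of `D_q(h, k)`; for the latter one needs `ζ^binom(n+i+1, 2) = ζ^binom(i+1, 2)`,
which holds because `n ∣ binom(n, 2)` for odd `n`.
-/

/-- The Gaussian (q-)binomial coefficient `[h choose k]_q` as a polynomial in `ℤ[q]`,
defined via the q-Pascal recurrence; it equals
`([h]_q [h−1]_q ⋯ [h−k+1]_q)/([k]_q ⋯ [1]_q)`. -/
noncomputable def qBinom : ℕ → ℕ → Polynomial ℤ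
  | _, 0 => 1
  | 0, _ + 1 => 0
  | h + 1, k + 1 => qBinom h k + Polynomial.X ^ (k + 1) * qBinom h (k + 1)

/-- The q-Delannoy number `D_q(h,k) = Σ_{j=0}^{h} q^{binom(j+1,2)} [k choose j]_q
[h+k−j choose k]_q`. -/
noncomputable def qDelannoy (h k : ℕ) : Polynomial ℤ :=
  ∑ j ∈ Finset.range (h + 1),
    Polynomial.X ^ ((j + 1).choose 2) * qBinom k j * qBinom (h + k - j) k

/-- The Delannoy number `D(h,k) = Σ_{j=0}^{h} binom(k,j) binom(h+k−j,k)`. -/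
def delannoy (h k : ℕ) : ℕ :=
  ∑ j ∈ Finset.range (h + 1), k.choose j * (h + k - j).choose k

lemma Nat.add_choose_two (a b : ℕ) : (a + b).choose 2 = a.choose 2 + a * b + b.choose 2 := by
  induction b with
  | zero => simp
  | succ b ih =>
    rw [← add_assoc, Nat.choose_succ_succ', ih, Nat.choose_one_right, Nat.choose_succ_succ',
      Nat.choose_one_right]
    ring

lemma pow_add_choose_two_of_odd {M : Type*} [Monoid M] {x : M} {n : ℕ} (hx : x ^ n = 1)
    (hodd : Odd n) (i : ℕ) : x ^ (n + i).choose 2 = x ^ i.choose 2 := by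
  obtain ⟨s, rfl⟩ := hodd
  have hn : (2 * s + 1).choose 2 = (2 * s + 1) * s := by
    rw [Nat.choose_two_right, Nat.add_sub_cancel, mul_comm 2 s, ← mul_assoc,
      Nat.mul_div_cancel _ two_pos]
  rw [Nat.add_choose_two, hn, ← mul_add, pow_add, pow_mul, hx, one_pow, one_mul]

lemma qBinom_zero_right (h : ℕ) : qBinom h 0 = 1 := by
  cases h <;> rfl

lemma qBinom_succ_succ (h k : ℕ) :
    qBinom (h + 1) (k + 1) = qBinom h k + X ^ (k + 1) * qBinom h (k + 1) := rfl

lemma qBinom_eq_zero_of_lt : ∀ {h k : ℕ}, h < k → qBinom h k = 0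
  | 0, _ + 1, _ => rfl
  | h + 1, k + 1, hlt => by
    rw [qBinom_succ_succ, qBinom_eq_zero_of_lt (by omega), qBinom_eq_zero_of_lt (by omega)]
    ring

lemma qBinom_self : ∀ h : ℕ, qBinom h h = 1
  | 0 => rfl
  | h + 1 => by
    rw [qBinom_succ_succ, qBinom_self h, qBinom_eq_zero_of_lt (by omega)]
    ring

lemma qBinom_succ_one : ∀ a : ℕ, qBinom (a + 1) 1 = X ^ a + qBinom a 1
  | 0 => by rw [qBinom_self, qBinom_eq_zero_of_lt zero_lt_one]; ring
  | a + 1 => by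
    linear_combination qBinom_succ_succ (a + 1) 0 + X * qBinom_succ_one a -
      qBinom_succ_succ a 0 + qBinom_zero_right (a + 1) - qBinom_zero_right a

lemma qBinom_succ_succ_of_le : ∀ {a b : ℕ}, b ≤ a →
    qBinom (a + 1) (b + 1) = X ^ (a - b) * qBinom a b + qBinom a (b + 1)
  | a, 0, _ => by rw [qBinom_succ_one, qBinom_zero_right, Nat.sub_zero, mul_one]
  | a + 1, c + 1, hca => by
    rcases (Nat.le_of_succ_le_succ hca).eq_or_lt with rfl | hlt
    · rw [Nat.sub_self, qBinom_self, qBinom_self, qBinom_eq_zero_of_lt (Nat.lt_succ_self _)]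
      ring
    · have ih₁ := qBinom_succ_succ_of_le hlt.le
      have ih₂ := qBinom_succ_succ_of_le hlt
      obtain ⟨d, rfl⟩ := Nat.exists_eq_add_of_lt hlt
      rw [show c + d + 1 - c = d + 1 by omega] at ih₁
      rw [show c + d + 1 - (c + 1) = d by omega] at ih₂
      rw [show c + d + 1 + 1 - (c + 1) = d + 1 by omega]
      linear_combination qBinom_succ_succ (c + d + 1 + 1) (c + 1) + ih₁ +
        X ^ (c + 2) * ih₂ - X ^ (d + 1) * qBinom_succ_succ (c + d + 1) c -
        qBinom_succ_succ (c + d + 1) (c + 1)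

lemma one_sub_X_pow_mul_qBinom {a b : ℕ} (hba : b ≤ a) :
    (1 - X ^ (b + 1)) * qBinom (a + 1) (b + 1) = (1 - X ^ (a + 1)) * qBinom a b := by
  obtain ⟨d, rfl⟩ := Nat.exists_eq_add_of_le hba
  have h := qBinom_succ_succ_of_le hba
  rw [Nat.add_sub_cancel_left] at h
  linear_combination qBinom_succ_succ (b + d) b - X ^ (b + 1) * h

lemma aeval_qBinom_succ_succ {R : Type*} [CommRing R] (x : R) (h k : ℕ) :
    aeval x (qBinom (h + 1) (k + 1)) =
      aeval x (qBinom h k) + x ^ (k + 1) * aeval x (qBinom h (k + 1)) := by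
  rw [qBinom_succ_succ, map_add, map_mul, map_pow, aeval_X]

noncomputable def qDelannoyTerm (h k j : ℕ) : ℤ[X] :=
  X ^ ((j + 1).choose 2) * qBinom k j * qBinom (h + k - j) k

lemma qDelannoyTerm_eq_zero_of_lt {h k j : ℕ} (hj : h < j) : qDelannoyTerm h k j = 0 := by
  unfold qDelannoyTerm
  rcases k.eq_zero_or_pos with rfl | hk
  · rw [qBinom_eq_zero_of_lt (by omega : 0 < j), mul_zero, zero_mul]
  · rw [qBinom_eq_zero_of_lt (by omega : h + k - j < k), mul_zero]

lemma qDelannoy_eq_sum_range {h N : ℕ} (k : ℕ) (hN : h + 1 ≤ N) :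
    qDelannoy h k = ∑ j ∈ range N, qDelannoyTerm h k j :=
  sum_subset (range_subset_range.mpr hN) fun _ _ hj =>
    qDelannoyTerm_eq_zero_of_lt (by simp only [mem_range] at hj; omega)

namespace IsPrimitiveRoot

theorem cyclotomic_dvd_iff_aeval_eq_zero {K : Type*} [Field K] [CharZero K] {μ : K} {n : ℕ}
    (hμ : IsPrimitiveRoot μ n) (hn : 0 < n) (p : ℤ[X]) :
    cyclotomic n ℤ ∣ p ↔ aeval μ p = 0 := by
  rw [cyclotomic_eq_minpoly hμ hn, minpoly.isIntegrallyClosed_dvd_iff (hμ.isIntegral hn)]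

variable {R : Type*} [CommRing R] [IsDomain R] {ζ : R} {n : ℕ}

theorem aeval_qBinom_eq_zero (hζ : IsPrimitiveRoot ζ n) {b : ℕ} (hb : 0 < b) (hbn : b < n) :
    aeval ζ (qBinom n b) = 0 := by
  obtain ⟨m, rfl⟩ : ∃ m, n = m + 1 := ⟨n - 1, by omega⟩
  obtain ⟨c, rfl⟩ : ∃ c, b = c + 1 := ⟨b - 1, by omega⟩
  have key := congrArg (aeval ζ) (one_sub_X_pow_mul_qBinom (a := m) (b := c) (by omega))
  simp only [map_mul, map_sub, map_one, map_pow, aeval_X, hζ.pow_eq_one, sub_self,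
    zero_mul] at key
  refine (mul_eq_zero.mp key).resolve_left (sub_ne_zero.mpr ?_)
  exact (hζ.pow_ne_one_of_pos_of_lt (Nat.succ_ne_zero c) hbn).symm

theorem aeval_qBinom_add_of_lt (hζ : IsPrimitiveRoot ζ n) (a : ℕ) {b : ℕ} (hb : b < n) :
    aeval ζ (qBinom (a + n) b) = aeval ζ (qBinom a b) := by
  induction a generalizing b with
  | zero =>
    cases b with
    | zero => rw [qBinom_zero_right, qBinom_zero_right]
    | succ c =>
      rw [zero_add, hζ.aeval_qBinom_eq_zero c.succ_pos hb, qBinom_eq_zero_of_lt c.succ_pos,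
        map_zero]
  | succ a ih =>
    cases b with
    | zero => rw [qBinom_zero_right, qBinom_zero_right]
    | succ c =>
      rw [Nat.add_right_comm, aeval_qBinom_succ_succ, aeval_qBinom_succ_succ, ih (by omega),
        ih hb]

theorem aeval_qBinom_add_add (hζ : IsPrimitiveRoot ζ n) (hn : 0 < n) (a b : ℕ) :
    aeval ζ (qBinom (a + n) (b + n)) = aeval ζ (qBinom a (b + n)) + aeval ζ (qBinom a b) := by
  obtain ⟨m, rfl⟩ : ∃ m, n = m + 1 := ⟨n - 1, by omega⟩
  induction a generalizing b with
  | zero =>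
    cases b with
    | zero => simp [qBinom_self, qBinom_eq_zero_of_lt hn]
    | succ c =>
      rw [zero_add, qBinom_eq_zero_of_lt (by omega), qBinom_eq_zero_of_lt (by omega),
        qBinom_eq_zero_of_lt c.succ_pos]
      simp
  | succ a ih =>
    cases b with
    | zero =>
      have ih₀ := ih 0
      rw [zero_add] at ih₀ ⊢
      rw [Nat.add_right_comm, aeval_qBinom_succ_succ, aeval_qBinom_succ_succ,
        hζ.aeval_qBinom_add_of_lt a m.lt_succ_self, ih₀, hζ.pow_eq_one, qBinom_zero_right,
        qBinom_zero_right]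
      ring
    | succ c =>
      have ih₁ := ih (c + 1)
      rw [Nat.add_right_comm c] at ih₁
      rw [Nat.add_right_comm, Nat.add_right_comm c, aeval_qBinom_succ_succ,
        aeval_qBinom_succ_succ, aeval_qBinom_succ_succ, ih c, ih₁]
      have hpow : ζ ^ (c + (m + 1) + 1) = ζ ^ (c + 1) := by
        rw [Nat.add_right_comm, pow_add, hζ.pow_eq_one, mul_one]
      rw [hpow]
      ring

theorem aeval_qDelannoyTerm_of_lt (hζ : IsPrimitiveRoot ζ n) (h k : ℕ) {j : ℕ} (hj : j < n) :
    aeval ζ (qDelannoyTerm (h + n) (k + n) j) =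
      aeval ζ (qDelannoyTerm h (k + n) j) + aeval ζ (qDelannoyTerm (h + n) k j) := by
  simp only [qDelannoyTerm, map_mul]
  rw [show h + n + (k + n) - j = h + (k + n) - j + n by omega,
    show h + n + k - j = h + (k + n) - j by omega, hζ.aeval_qBinom_add_add (by omega),
    hζ.aeval_qBinom_add_of_lt k hj]
  ring

theorem aeval_qDelannoyTerm_add (hζ : IsPrimitiveRoot ζ n) (hodd : Odd n) (h k : ℕ) {i : ℕ}
    (hi : i ≤ h) :
    aeval ζ (qDelannoyTerm (h + n) (k + n) (n + i)) =
      aeval ζ (qDelannoyTerm h (k + n) (n + i)) + aeval ζ (qDelannoyTerm (h + n) k (n + i)) +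
        aeval ζ (qDelannoyTerm h k i) := by
  simp only [qDelannoyTerm, map_mul, map_pow, aeval_X]
  rw [show h + n + (k + n) - (n + i) = h + k - i + n by omega,
    show h + (k + n) - (n + i) = h + k - i by omega, show h + n + k - (n + i) = h + k - i by omega,
    add_assoc n i 1, pow_add_choose_two_of_odd hζ.pow_eq_one hodd, add_comm n i,
    hζ.aeval_qBinom_add_add hodd.pos, hζ.aeval_qBinom_add_add hodd.pos]
  ring

theorem aeval_qDelannoy_add_add (hζ : IsPrimitiveRoot ζ n) (hodd : Odd n) (h k : ℕ) :
    aeval ζ (qDelannoy (h + n) (k + n)) =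
      aeval ζ (qDelannoy (h + n) k + qDelannoy h (k + n) + qDelannoy h k) := by
  have hN : h + n + 1 ≤ n + (h + 1) := by omega
  rw [qDelannoy_eq_sum_range (k + n) hN, qDelannoy_eq_sum_range k hN,
    qDelannoy_eq_sum_range (h := h) (k + n) (Nat.le_add_left _ n),
    qDelannoy_eq_sum_range k le_rfl]
  simp only [map_add, map_sum]
  rw [sum_range_add _ n (h + 1), sum_range_add _ n (h + 1), sum_range_add _ n (h + 1), sum_congr rfl fun j hj => hζ.aeval_qDelannoyTerm_of_lt h k (mem_range.mp hj),
    sum_congr rfl fun i hi =>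
      hζ.aeval_qDelannoyTerm_add hodd h k (Nat.lt_succ_iff.mp (mem_range.mp hi))]
  simp only [sum_add_distrib]
  ring

end IsPrimitiveRoot

theorem qDelannoy_step_odd_general (n : ℕ) (hodd : Odd n) (h k : ℕ) :
    Polynomial.cyclotomic n ℤ ∣
      qDelannoy (h + n) (k + n) -
        (qDelannoy (h + n) k + qDelannoy h (k + n) + qDelannoy h k) := by
  have hζ := Complex.isPrimitiveRoot_exp n hodd.pos.ne'
  rw [hζ.cyclotomic_dvd_iff_aeval_eq_zero hodd.pos, map_sub, sub_eq_zero]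
  exact hζ.aeval_qDelannoy_add_add hodd h k

theorem qDelannoy_step_odd (n : ℕ) (hn : 0 < n) (hodd : Odd n) (h k : ℕ) :
    Polynomial.cyclotomic n ℤ ∣
      qDelannoy (h + n) (k + n) -
        (qDelannoy (h + n) k + qDelannoy h (k + n) + qDelannoy h k) :=
  qDelannoy_step_odd_general n hodd h k
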